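/- In the main setting with L = Q :_R a, one has aL = aQ and L² = QL. -/

import Mathlib

noncomputable section

open RingTheory.Sequence

universe u v

variable (R : Type u) [CommRing R]

/-- The length of an `R`-module, defined as the Krull dimension of its lattice of submodules
(equivalently, the supremum of lengths of chains of submodules), truncated to `ℕ`. -/
noncomputable def mLength (M : Type v) [AddCommGroup M] [Module R M] : ℕ :=
  WithTop.untopD 0 (WithBot.unbotD 0 (Order.krullDim (Submodule R M)))

/-- The depth of an `R`-module `M` with respect to an ideal `I` : the supremum of lengths of
regular sequences on `M` consisting of elements of `I`. -/
noncomputable def iDepth (I : Ideal R) (M : Type v) [AddCommGroup M] [Module R M] : ℕ∞ :=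
  sSup {n : ℕ∞ | ∃ rs : List R, (∀ r ∈ rs, r ∈ I) ∧ IsRegular M rs ∧ (rs.length : ℕ∞) = n}

/-- A Cohen–Macaulay local ring: a Noetherian local ring whose depth equals its Krull
dimension. -/
def IsCMLocalRing : Prop :=
  IsLocalRing R ∧ IsNoetherianRing R ∧
    ∀ m : Ideal R, m.IsMaximal → (iDepth R m R : WithBot ℕ∞) = ringKrullDim R

/-- The dimension of a module `M` is `s`, i.e. `dim R/ann M = s`. -/
def moduleDimIs (M : Type v) [AddCommGroup M] [Module R M] (s : ℕ) : Prop :=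
  ringKrullDim (R ⧸ Module.annihilator R M) = (s : WithBot ℕ∞)

/-- A (nonzero finitely generated) Cohen–Macaulay module over a local ring:
depth M = dim M. -/
def IsCMModule (M : Type v) [AddCommGroup M] [Module R M] : Prop :=
  Module.Finite R M ∧
    ∀ m : Ideal R, m.IsMaximal →
      (iDepth R m M : WithBot ℕ∞) = ringKrullDim (R ⧸ Module.annihilator R M)

/-- The Ext module `Ext_R^i(N, M)`. -/
noncomputable def extMod (i : ℕ) (N M : Type u) [AddCommGroup N] [Module R N]
    [AddCommGroup M] [Module R M] : ModuleCat.{u} R :=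
  ((Ext R (ModuleCat.{u} R) i).obj (Opposite.op (ModuleCat.of R N))).obj (ModuleCat.of R M)

/-- `M` is a canonical module of the `d`-dimensional Cohen--Macaulay local ring `R` :
`M` is finitely generated and its Bass numbers `μ^i = dim_k Ext^i(k, M)` are `1` in degree `d`
and `0` elsewhere. -/
def IsCanonicalModule (d : ℕ) (M : Type u) [AddCommGroup M] [Module R M] : Prop :=
  Module.Finite R M ∧
    ∀ m : Ideal R, m.IsMaximal → ∀ i : ℕ,
      (i = d → Nonempty ((extMod R i (R ⧸ m) M) ≃ₗ[R] (R ⧸ m))) ∧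
      (i ≠ d → Subsingleton (extMod R i (R ⧸ m) M))

/-- A Gorenstein local ring: a Cohen–Macaulay local ring which is its own canonical module. -/
def IsGorensteinLocalRing : Prop :=
  IsCMLocalRing R ∧ ∀ d : ℕ, ringKrullDim R = (d : WithBot ℕ∞) → IsCanonicalModule R d R

/-- The Cohen–Macaulay type of `R` (of dimension `d`) equals `r`:
`r = dim_k Ext^d(k, R)`. -/
def HasCMTypeEq (d r : ℕ) : Prop :=
  ∀ m : Ideal R, m.IsMaximal → mLength R (extMod R d (R ⧸ m) R) = r

/-- `e` gives the Hilbert coefficients of the ideal `J` in the `d`-dimensional local ring `R`: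
for all large `n`, `ℓ(R/J^{n+1}) = Σ_{i=0}^d (-1)^i e_i binom(n+d-i, d-i)`. -/
def HasHilbertCoeffs (J : Ideal R) (d : ℕ) (e : ℕ → ℤ) : Prop :=
  ∃ N : ℕ, ∀ n ≥ N, (mLength R (R ⧸ J ^ (n + 1)) : ℤ) =
    ∑ i ∈ Finset.range (d + 1), (-1) ^ i * e i * ((n + d - i).choose (d - i) : ℤ)

/-- The multiplicity `e_a^0(M)` of the `s`-dimensional module `M` with respect to `a` is `e`:
`s! ℓ(M/a^{n+1}M)/n^s → e`. -/
def HasMultiplicity (a : Ideal R) (M : Type v) [AddCommGroup M] [Module R M]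
    (s : ℕ) (e : ℕ) : Prop :=
  Filter.Tendsto
    (fun n : ℕ => (Nat.factorial s : ℝ) *
      (mLength R (M ⧸ (a ^ (n + 1) • (⊤ : Submodule R M))) : ℝ) / (n : ℝ) ^ s)
    Filter.atTop (nhds (e : ℝ))

/-- `M` is free as a module over `R/a` (equivalently, `R`-linearly isomorphic to a direct sum
of copies of `R/a`). -/
def IsFreeOver (a : Ideal R) (M : Type u) [AddCommGroup M] [Module R M] : Prop :=
  ∃ ι : Type u, Nonempty (M ≃ₗ[R] (ι →₀ R ⧸ a))

/-- `M` is an Ulrich module with respect to the `m`-primary ideal `a`: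
`M` is Cohen–Macaulay, `e_a^0(M) = ℓ(M/aM)`, and `M/aM` is `R/a`-free. -/
def IsUlrichModule (a : Ideal R) (M : Type u) [AddCommGroup M] [Module R M] : Prop :=
  IsCMModule R M ∧
    (∃ s : ℕ, moduleDimIs R M s ∧
      HasMultiplicity R a M s (mLength R (M ⧸ (a • (⊤ : Submodule R M))))) ∧
    IsFreeOver R a (M ⧸ (a • (⊤ : Submodule R M)))

/-- `R` is generalized Gorenstein with respect to `a`, witnessed by the canonical module `M`:
there is an exact sequence `0 → R → M → C → 0` with `C` Ulrich with respect to `a` and with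
`R/a → M/aM` injective. -/
def IsGGLWith (a : Ideal R) (M : Type u) [AddCommGroup M] [Module R M] : Prop :=
  ∃ φ : R →ₗ[R] M, Function.Injective φ ∧
    IsUlrichModule R a (M ⧸ LinearMap.range φ) ∧
    ∀ r : R, φ r ∈ a • (⊤ : Submodule R M) → r ∈ a

/-- `f` is a system of parameters of `R` (of dimension `d`): it generates an ideal whose
radical is the maximal ideal. -/
def IsParameterSystem (d : ℕ) (f : Fin d → R) : Prop :=
  ringKrullDim R = (d : WithBot ℕ∞) ∧
    ∀ m : Ideal R, m.IsMaximal → (Ideal.span (Set.range f)).radical = m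

/-- `a` is an `m`-primary ideal of the local ring `R`. -/
def IsMPrimaryIdeal (a : Ideal R) : Prop :=
  a ≠ ⊤ ∧ ∀ m : Ideal R, m.IsMaximal → a.radical = m

/-- The colon submodule `Y : X` inside a commutative `R`-algebra `A`. -/
def resid (A : Type v) [CommRing A] [Algebra R A] (Y X : Submodule R A) : Submodule R A where
  carrier := {y | ∀ x ∈ X, y * x ∈ Y}
  add_mem' := by
    intro a b ha hb x hx
    simpa [add_mul] using Y.add_mem (ha x hx) (hb x hx)
  zero_mem' := by intro x hx; simp
  smul_mem' := by
    intro c y hy x hx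
    rw [smul_mul_assoc]
    exact Submodule.smul_mem Y c (hy x hx)

/-- The fractional ideal `I/a = {x/a : x ∈ I}` inside the total quotient ring of `R`
(for `a` a nonzerodivisor belonging to a reduction of `I`). -/
noncomputable def fracByDiv (I : Ideal R) (a : R) : Submodule R (FractionRing R) :=
  Submodule.comap ((Algebra.lmul R (FractionRing R)) (algebraMap R (FractionRing R) a))
    (Submodule.map (Algebra.linearMap R (FractionRing R)) I)

/-!
Because `R` has depth `d` and `Q` is `m`-primary, `Ext^i(R/Q, R) = 0` for `i < d` (Rees), so
Davis' prime avoidance turns the given generators of `Q` into a regular sequence `v` that still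
generates `Q`. A regular sequence has only Koszul syzygies: `∑ cᵢ vᵢ = 0` forces every `cᵢ ∈ Q`.
For `x ∈ L` and `t ∈ a` write `xt = ∑ sᵢ vᵢ`; comparing with `tJ ⊆ aJ = aQ` through this syzygy
property gives `sᵢ J ⊆ Q`, i.e. `sᵢ ∈ a`, so `xt ∈ aQ`. This is `aL = aQ`, and applied to
`x vᵢ` it also gives `L ⊆ a`. The same argument with `J` replaced by `a` then gives `L² = QL`.
-/
section

variable {R}

theorem Ideal.ofList_ofFn {n : ℕ} (v : Fin n → R) :
    Ideal.ofList (List.ofFn v) = Ideal.span (Set.range v) := by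
  simp [Ideal.ofList, Set.range]

theorem Ideal.mem_mul_span_range_iff {ι : Type*} [Fintype ι] {b : Ideal R} {v : ι → R} {z : R} :
    z ∈ b * Ideal.span (Set.range v) ↔ ∃ c : ι → R, (∀ i, c i ∈ b) ∧ ∑ i, c i * v i = z := by
  rw [← Ideal.smul_eq_mul, Ideal.span, Submodule.mem_ideal_smul_span_iff_exists_sum]
  constructor
  · rintro ⟨c, hc, rfl⟩
    exact ⟨c, hc, by simp [Finsupp.sum_fintype]⟩
  · rintro ⟨c, hc, rfl⟩
    exact ⟨Finsupp.equivFunOnFinite.symm c, hc, by simp [Finsupp.sum_fintype]⟩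

theorem Ideal.span_singleton_add_sup_eq {x z : R} {I : Ideal R} (hz : z ∈ I) :
    Ideal.span {x + z} ⊔ I = Ideal.span {x} ⊔ I := by
  apply le_antisymm <;> refine sup_le ?_ le_sup_right <;> rw [Ideal.span_singleton_le_iff_mem]
  · exact add_mem (Ideal.mem_sup_left (Ideal.mem_span_singleton_self x)) (Ideal.mem_sup_right hz)
  · simpa using sub_mem (Ideal.mem_sup_left (Ideal.mem_span_singleton_self (x + z)))
      (Ideal.mem_sup_right hz)

-- Davis' form of prime avoidance.
theorem Ideal.exists_mem_forall_add_notMem (s : Finset (Ideal R)) (hs : ∀ p ∈ s, p.IsPrime)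
    {x : R} {I : Ideal R} (h : ∀ p ∈ s, x ∈ p → ¬I ≤ p) : ∃ y ∈ I, ∀ p ∈ s, x + y ∉ p := by
  classical
  induction s using Finset.strongInduction with
  | H s ih =>
  obtain rfl | hne := s.eq_empty_or_nonempty
  · exact ⟨0, I.zero_mem, by simp⟩
  obtain ⟨q, hq⟩ := s.exists_minimal hne
  obtain ⟨y, hyI, hy⟩ := ih (s.erase q) (Finset.erase_ssubset hq.prop)
    (fun p hp => hs p (Finset.mem_of_mem_erase hp)) (fun p hp => h p (Finset.mem_of_mem_erase hp))
  by_cases hxy : x + y ∈ q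
  swap
  · refine ⟨y, hyI, fun p hp => ?_⟩
    by_cases hpq : p = q
    · exact hpq ▸ hxy
    · exact hy p (Finset.mem_erase.mpr ⟨hpq, hp⟩)
  have hq_prime := hs q hq.prop
  have hIq : ¬I ≤ q := fun hle => h q hq.prop (by simpa using q.sub_mem hxy (hle hyI)) hle
  obtain ⟨c, hcI, hcq⟩ := SetLike.not_le_iff_exists.mp hIq
  -- `q` is minimal in `s`, so no other prime of `s` lies inside it.
  have hinf : ¬(s.erase q).inf id ≤ q := by
    rw [hq_prime.inf_le']
    rintro ⟨p, hp, hpq⟩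
    exact Finset.ne_of_mem_erase hp (le_antisymm hpq (hq.2 (Finset.mem_of_mem_erase hp) hpq))
  obtain ⟨t, ht, htq⟩ := SetLike.not_le_iff_exists.mp hinf
  refine ⟨y + t * c, I.add_mem hyI (I.mul_mem_left t hcI), fun p hp hmem => ?_⟩
  rw [← add_assoc] at hmem
  by_cases hpq : p = q
  · subst hpq
    rcases hq_prime.mem_or_mem (by simpa using p.sub_mem hmem hxy) with htp | hcp
    exacts [htq htp, hcq hcp]
  · have hp' : p ∈ s.erase q := Finset.mem_erase.mpr ⟨hpq, hp⟩
    have htp : t ∈ p := Finset.inf_le (f := id) hp' ht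
    exact hy p hp' (by simpa using p.sub_mem hmem (p.mul_mem_right c htp))

namespace RingTheory.Sequence.IsWeaklyRegular

variable {n : ℕ} {v : Fin n → R}

theorem mem_span_of_sum_mul_eq_zero
    (hv : IsWeaklyRegular R (List.ofFn v)) {c : Fin n → R} (hc : ∑ i, c i * v i = 0) (i : Fin n) :
    c i ∈ Ideal.span (Set.range v) := by
  induction n with
  | zero => exact i.elim0
  | succ n ih =>
    rw [List.ofFn_succ', List.concat_eq_append, isWeaklyRegular_append_iff,
      isWeaklyRegular_singleton_iff, isSMulRegular_quotient_iff_mem_of_smul_mem,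
      smul_eq_mul, Ideal.mul_top, Ideal.ofList_ofFn] at hv
    obtain ⟨hinit, hlast⟩ := hv
    set v' : Fin n → R := fun j => v j.castSucc
    have hv'_le : Ideal.span (Set.range v') ≤ Ideal.span (Set.range v) :=
      Ideal.span_mono (Set.range_comp_subset_range _ _)
    have hlast_mem : v (Fin.last n) ∈ Ideal.span (Set.range v) := Ideal.subset_span ⟨_, rfl⟩
    rw [Fin.sum_univ_castSucc] at hc
    have hc_last : c (Fin.last n) ∈ Ideal.span (Set.range v') := by
      refine hlast _ ?_
      rw [smul_eq_mul, mul_comm, eq_neg_of_add_eq_zero_right hc]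
      exact neg_mem (Ideal.sum_mem _ fun j _ => Ideal.mul_mem_left _ _ (Ideal.subset_span ⟨j, rfl⟩))
    obtain ⟨e, he⟩ := Ideal.mem_span_range_iff_exists_fun.mp hc_last
    have hshift : ∀ j, c j.castSucc + e j * v (Fin.last n) ∈ Ideal.span (Set.range v') := by
      refine ih hinit ?_
      calc ∑ j, (c j.castSucc + e j * v (Fin.last n)) * v' j
          = ∑ j, c j.castSucc * v' j + (∑ j, e j * v' j) * v (Fin.last n) := by
            rw [Finset.sum_mul, ← Finset.sum_add_distrib]
            exact Finset.sum_congr rfl fun j _ => by ring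
        _ = 0 := by rw [he, hc]
    induction i using Fin.lastCases with
    | last => exact hv'_le hc_last
    | cast j =>
      have : c j.castSucc = (c j.castSucc + e j * v (Fin.last n)) - e j * v (Fin.last n) := by ring
      rw [this]
      exact sub_mem (hv'_le (hshift j)) (Ideal.mul_mem_left _ _ hlast_mem)

theorem mul_mem_colon_mul (hv : IsWeaklyRegular R (List.ofFn v)) {b J : Ideal R} {x t : R}
    (hxt : x * t ∈ Ideal.span (Set.range v))
    (htJ : ∀ j ∈ J, t * j ∈ b * Ideal.span (Set.range v))
    (hxb : ∀ s ∈ b, x * s ∈ Ideal.span (Set.range v)) :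
    x * t ∈ (Ideal.span (Set.range v)).colon J * Ideal.span (Set.range v) := by
  obtain ⟨s, hs⟩ := Ideal.mem_span_range_iff_exists_fun.mp hxt
  rw [← hs]
  refine Ideal.sum_mem _ fun i _ => Ideal.mul_mem_mul ?_ (Ideal.subset_span ⟨i, rfl⟩)
  refine Submodule.mem_colon.mpr fun j hj => ?_
  obtain ⟨u, hu, hu_sum⟩ := Ideal.mem_mul_span_range_iff.mp (htJ j hj)
  have hsyz : s i * j - x * u i ∈ Ideal.span (Set.range v) := by
    refine hv.mem_span_of_sum_mul_eq_zero (c := fun k => s k * j - x * u k) ?_ i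
    calc ∑ k, (s k * j - x * u k) * v k = j * ∑ k, s k * v k - x * ∑ k, u k * v k := by
          simp only [Finset.mul_sum, ← Finset.sum_sub_distrib]
          exact Finset.sum_congr rfl fun k _ => by ring
      _ = 0 := by rw [hs, hu_sum]; ring
  simpa using add_mem hsyz (hxb _ (hu i))

theorem mem_sup_of_mul_mem_mul (hv : IsWeaklyRegular R (List.ofFn v)) {b : Ideal R} {x : R}
    (i : Fin n) (h : x * v i ∈ b * Ideal.span (Set.range v)) :
    x ∈ b ⊔ Ideal.span (Set.range v) := by
  obtain ⟨u, hu, hu_sum⟩ := Ideal.mem_mul_span_range_iff.mp h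
  have hsyz : u i - x ∈ Ideal.span (Set.range v) := by
    simpa using hv.mem_span_of_sum_mul_eq_zero (c := fun k => u k - if k = i then x else 0)
      (by simp [sub_mul, Finset.sum_sub_distrib, hu_sum]) i
  simpa using sub_mem (Ideal.mem_sup_left (hu i)) (Ideal.mem_sup_right hsyz)

theorem colon_mul_eq_and_mul_self_eq (hv : IsWeaklyRegular R (List.ofFn v)) (hn : 0 < n)
    {Q J a L : Ideal R} (hQ : Q = Ideal.span (Set.range v)) (ha : a = Q.colon J)
    (haJ : a * J = a * Q) (hL : L = Q.colon a) :
    a * L = a * Q ∧ L * L = Q * L := by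
  subst hQ ha hL
  set Q := Ideal.span (Set.range v)
  have hQ_le_colon : ∀ K : Ideal R, Q ≤ Q.colon K := fun K t ht =>
    Submodule.mem_colon.mpr fun k _ => Q.mul_mem_right k ht
  have hmul : ∀ x ∈ Q.colon (Q.colon J), ∀ t ∈ Q.colon J, x * t ∈ Q.colon J * Q :=
    fun x hx t ht => hv.mul_mem_colon_mul (Submodule.mem_colon.mp hx t ht)
      (fun j hj => haJ ▸ Ideal.mul_mem_mul ht hj) (fun s hs => Submodule.mem_colon.mp hx s hs)
  have hL_le_a : Q.colon (Q.colon J) ≤ Q.colon J := fun x hx =>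
    sup_le le_rfl (hQ_le_colon J) <| hv.mem_sup_of_mul_mem_mul ⟨0, hn⟩ <|
      hmul x hx _ (hQ_le_colon J (Ideal.subset_span ⟨_, rfl⟩))
  refine ⟨le_antisymm ?_ (Ideal.mul_mono_right (hQ_le_colon _)),
    le_antisymm ?_ (Ideal.mul_mono_left (hQ_le_colon _))⟩
  · refine Ideal.mul_le.mpr fun t ht x hx => ?_
    rw [mul_comm t x]
    exact hmul x hx t ht
  · refine Ideal.mul_le.mpr fun x hx y hy => ?_
    rw [mul_comm x y, mul_comm Q]
    exact hv.mul_mem_colon_mul (Submodule.mem_colon.mp hy x (hL_le_a hx))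
      (fun s hs => hmul x hx s hs) (fun s hs => Submodule.mem_colon.mp hy s hs)

end RingTheory.Sequence.IsWeaklyRegular

theorem exists_isRegular_of_iDepth_eq {I : Ideal R} {M : Type v} [AddCommGroup M] [Module R M]
    [Nontrivial M] {d : ℕ} (h : iDepth R I M = d) :
    ∃ rs : List R, (∀ r ∈ rs, r ∈ I) ∧ IsRegular M rs ∧ rs.length = d := by
  unfold iDepth at h
  have : Nonempty {n : ℕ∞ | ∃ rs : List R, (∀ r ∈ rs, r ∈ I) ∧ IsRegular M rs ∧
      (rs.length : ℕ∞) = n} := ⟨⟨0, [], by simp, IsRegular.nil R M, rfl⟩⟩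
  obtain ⟨rs, hmem, hreg, hlen⟩ :=
    h ▸ ENat.sSup_mem_of_nonempty_of_lt_top (h ▸ ENat.natCast_lt_top d)
  exact ⟨rs, hmem, hreg, by exact_mod_cast hlen⟩

open CategoryTheory Abelian

theorem subsingleton_ext_quotSMulTop (N : ModuleCat.{u} R) {M : Type u} [AddCommGroup M]
    [Module R M] {x : R} (hx : IsSMulRegular M x) {n : ℕ}
    (h : ∀ i < n + 1, Subsingleton (Ext N (ModuleCat.of R M) i)) :
    ∀ i < n, Subsingleton (Ext N (ModuleCat.of R (QuotSMulTop x M)) i) := by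
  intro i hi
  have zero_i := AddCommGrpCat.isZero_of_iff_subsingleton.mpr (h i (by omega))
  have zero_succ := AddCommGrpCat.isZero_of_iff_subsingleton.mpr (h (i + 1) (by omega))
  exact AddCommGrpCat.subsingleton_of_isZero <| ShortComplex.Exact.isZero_of_both_zeros
    (Ext.covariant_sequence_exact₃' N (hx.smulShortComplex_shortExact (M := .of R M)) i (i + 1) rfl)
    (zero_i.eq_zero_of_src _) (zero_succ.eq_zero_of_tgt _)

theorem not_le_of_mem_associatedPrimes_of_subsingleton_ext_zero [IsNoetherianRing R]
    {M : Type u} [AddCommGroup M] [Module R M] [Module.Finite R M] {Q : Ideal R}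
    (h : Subsingleton (Ext (ModuleCat.of R (R ⧸ Q)) (ModuleCat.of R M) 0))
    {p : Ideal R} (hp : p ∈ associatedPrimes R M) : ¬Q ≤ p := by
  have : Subsingleton (ModuleCat.of R (R ⧸ Q) ⟶ ModuleCat.of R M) :=
    Ext.addEquiv₀.subsingleton_congr.mp h
  have : Subsingleton (ModuleCat.of R (R ⧸ Q) →ₗ[R] ModuleCat.of R M) :=
    ModuleCat.homAddEquiv.symm.subsingleton
  obtain ⟨r, hrQ, hr⟩ := IsSMulRegular.subsingleton_linearMap_iff.mp this
  rw [Ideal.annihilator_quotient] at hrQ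
  intro hQp
  have hr' : r ∈ ⋃ p ∈ associatedPrimes R M, (p : Set R) := Set.mem_biUnion hp (hQp hrQ)
  rw [biUnion_associatedPrimes_eq_compl_regular] at hr'
  exact hr' hr

theorem QuotSMulTop.sup_span_le_annihilator {M : Type*} [AddCommGroup M] [Module R M]
    {B : Ideal R} (hB : B ≤ Module.annihilator R M) (y : R) :
    B ⊔ Ideal.span {y} ≤ Module.annihilator R (QuotSMulTop y M) :=
  sup_le (hB.trans (LinearMap.annihilator_le_of_surjective _ (Submodule.mkQ_surjective _)))
    ((Ideal.span_singleton_le_iff_mem _).mpr (QuotSMulTop.mem_annihilator (M := M) y))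

-- `B` records the generators already divided out of `M`.
theorem exists_isWeaklyRegular_ofList_sup_eq [IsNoetherianRing R] {M : Type u} [AddCommGroup M]
    [Module R M] [Module.Finite R M] (xs : List R) {B : Ideal R}
    (hB : B ≤ Module.annihilator R M)
    (hext : ∀ i < xs.length,
      Subsingleton (Ext (ModuleCat.of R (R ⧸ (Ideal.ofList xs ⊔ B))) (ModuleCat.of R M) i)) :
    ∃ ys : List R, ys.length = xs.length ∧ Ideal.ofList ys ⊔ B = Ideal.ofList xs ⊔ B ∧
      IsWeaklyRegular M ys := by
  induction xs generalizing M B with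
  | nil => exact ⟨[], rfl, rfl, IsWeaklyRegular.nil R M⟩
  | cons x xs ih =>
    have hfin := associatedPrimes.finite R M
    have hB_le : ∀ p ∈ associatedPrimes R M, B ≤ p := fun p hp =>
      hB.trans (Submodule.annihilator_top (R := R) (M := M) ▸ hp.annihilator_le)
    obtain ⟨z, hz, hxz⟩ := Ideal.exists_mem_forall_add_notMem hfin.toFinset
      (fun p hp => (hfin.mem_toFinset.mp hp).isPrime) (x := x) (I := Ideal.ofList xs)
      fun p hp hxp hle => by
        rw [hfin.mem_toFinset] at hp
        refine not_le_of_mem_associatedPrimes_of_subsingleton_ext_zero (hext 0 (by simp)) hp ?_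
        rw [Ideal.ofList_cons]
        exact sup_le (sup_le ((Ideal.span_singleton_le_iff_mem _).mpr hxp) hle) (hB_le p hp)
    have hreg : IsSMulRegular M (x + z) := by
      by_contra hzd
      have : x + z ∈ ⋃ p ∈ associatedPrimes R M, (p : Set R) := by
        rwa [biUnion_associatedPrimes_eq_compl_regular]
      obtain ⟨p, hp, hxzp⟩ := Set.mem_iUnion₂.mp this
      exact hxz p (hfin.mem_toFinset.mpr hp) hxzp
    have hQ : Ideal.ofList xs ⊔ (B ⊔ Ideal.span {x + z}) = Ideal.ofList (x :: xs) ⊔ B := by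
      rw [Ideal.ofList_cons, ← Ideal.span_singleton_add_sup_eq hz]
      ac_rfl
    obtain ⟨ys, hlen, hspan, hys⟩ := ih (M := QuotSMulTop (x + z) M)
      (QuotSMulTop.sup_span_le_annihilator hB _)
      (by rw [hQ]; exact subsingleton_ext_quotSMulTop _ hreg hext)
    refine ⟨(x + z) :: ys, by simp [hlen], ?_, (isWeaklyRegular_cons_iff M _ _).mpr ⟨hreg, hys⟩⟩
    rw [← hQ, ← hspan, Ideal.ofList_cons]
    ac_rfl

end

theorem stmt10_general (R : Type u) [CommRing R]
    (hCM : IsCMLocalRing R) (d : ℕ) (hd : 0 < d)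
    (hdim : ringKrullDim R = (d : WithBot ℕ∞))
    (f : Fin d → R) (hpar : IsParameterSystem R d f)
    (Q : Ideal R) (hQ : Q = Ideal.span (Set.range f))
    (J : Ideal R)
    (a : Ideal R)
    (h1 : a = Submodule.colon Q J) (h2 : a * J = a * Q)
    (L : Ideal R) (hL : L = Submodule.colon Q a) :
    a * L = a * Q ∧ L * L = Q * L := by
  obtain ⟨_, _, hdepth⟩ := hCM
  have hm := IsLocalRing.maximalIdeal.isMaximal R
  obtain ⟨rs, hrs_mem, hrs_reg, hrs_len⟩ := exists_isRegular_of_iDepth_eq (M := R)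
    (by exact_mod_cast (hdepth _ hm).trans hdim)
  have hext : ∀ i < d, Subsingleton
      (CategoryTheory.Abelian.Ext (ModuleCat.of R (R ⧸ Q)) (ModuleCat.of R R) i) := by
    rw [← hrs_len]
    refine ModuleCat.subsingleton_ext_of_exists_isRegular _ (.of R (R ⧸ Q)) ?_ (.of R R) ?_ rs
      hrs_mem hrs_reg
    · rw [Module.support_eq_zeroLocus, Ideal.annihilator_quotient,
        PrimeSpectrum.zeroLocus_subset_zeroLocus_iff, hQ, hpar.2 _ hm]
    · simpa [smul_eq_mul, Ideal.mul_top] using hm.ne_top.lt_top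
  have hQf : Ideal.ofList (List.ofFn f) ⊔ ⊥ = Q := by rw [sup_bot_eq, Ideal.ofList_ofFn, hQ]
  obtain ⟨ys, hlen, hspan, hys⟩ := exists_isWeaklyRegular_ofList_sup_eq (M := R) (List.ofFn f)
    bot_le (by rwa [hQf, List.length_ofFn])
  rw [hQf, sup_bot_eq, ← List.ofFn_get ys, Ideal.ofList_ofFn] at hspan
  rw [← List.ofFn_get ys] at hys
  exact hys.colon_mul_eq_and_mul_self_eq (by simp at hlen; omega) hspan.symm h1 h2 hL

theorem stmt10 (R : Type u) [CommRing R]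
    (hCM : IsCMLocalRing R) (d : ℕ) (hd : 0 < d)
    (hdim : ringKrullDim R = (d : WithBot ℕ∞))
    (hres : ∀ m : Ideal R, m.IsMaximal → Infinite (R ⧸ m))
    (I : Ideal R) (hIne : I ≠ ⊤) (hcan : IsCanonicalModule R d ↥I)
    (hng : ¬ IsGorensteinLocalRing R)
    (f : Fin d → R) (hpar : IsParameterSystem R d f) (hf1 : f ⟨0, hd⟩ ∈ I)
    (Q : Ideal R) (hQ : Q = Ideal.span (Set.range f))
    (J : Ideal R) (hJ : J = I ⊔ Q)
    (a : Ideal R) (hprim : IsMPrimaryIdeal R a)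
    (h1 : a = Submodule.colon Q J) (h2 : a * J = a * Q)
    (h3 : ∃ (e : ℕ → ℤ) (r : ℕ), HasHilbertCoeffs R J d e ∧ HasCMTypeEq R d r ∧
      e 1 = (mLength R (R ⧸ a) : ℤ) * (r : ℤ))
    (L : Ideal R) (hL : L = Submodule.colon Q a) :
    a * L = a * Q ∧ L * L = Q * L :=
  stmt10_general R hCM d hd hdim f hpar Q hQ J a h1 h2 L hL

end
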